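/- Let m ≥ 1, let k ∈ {0, 1, …, m−1}, and let a_1, …, a_k, u_1, …, u_m, v ∈ Θ be homogeneous polynomials of degree N such that u_1, …, u_m are pairwise distinct. Then (a_1⋯a_k · ∏_{i=1}^m (1 − u_i)^{-1}) ⊙ (1 − v)^{-1} = a_1⋯a_k · (1 − v)^{m−k−1} · ∏_{i=1}^m (1 − u_i − v)^{-1}, an identity in MvPowerSeries σ ℚ (all series 1 − u_i, 1 − v, 1 − u_i − v have constant term 1 and hence are invertible). -/

import Mathlib

variable {σ : Type*}

/-- Total degree of a monomial. -/
def monDeg (d : σ →₀ ℕ) : ℕ := d.sum fun _ n => n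

/-- `Θ`: series whose coefficients vanish in degrees not divisible by `N`. -/
def InTheta (N : ℕ) (f : MvPowerSeries σ ℚ) : Prop :=
  ∀ d : σ →₀ ℕ, ¬ (N ∣ monDeg d) → MvPowerSeries.coeff d f = 0

/-- `f^(k)`: homogeneous component of total degree `N * k`. -/
noncomputable def homComp (N : ℕ) (f : MvPowerSeries σ ℚ) (k : ℕ) : MvPowerSeries σ ℚ :=
  fun d => if monDeg d = N * k then MvPowerSeries.coeff d f else 0

/-- The operation `⊙`: `f ⊙ g = Σ_{k,ℓ} C(k+ℓ,k) f^(k) g^(ℓ)`, defined coefficientwise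
(at a monomial of total degree `m`, only indices `k, ℓ ≤ m` can contribute, for `N ≥ 1`). -/
noncomputable def odot (N : ℕ) (f g : MvPowerSeries σ ℚ) : MvPowerSeries σ ℚ :=
  fun d => ∑ k ∈ Finset.range (monDeg d + 1), ∑ l ∈ Finset.range (monDeg d + 1),
    ((k + l).choose k : ℚ) * MvPowerSeries.coeff d (homComp N f k * homComp N g l)

/-- The `E`-transform: `E f = Σ_k (q^k / k!) f^(k)`. -/
noncomputable def Etrans (N : ℕ) (f : MvPowerSeries σ ℚ) :
    PowerSeries (MvPowerSeries σ ℚ) :=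
  PowerSeries.mk fun k => (k.factorial : ℚ)⁻¹ • homComp N f k

/-- `exp(q·u) = Σ_k (q^k / k!) u^k`. -/
noncomputable def expQ (u : MvPowerSeries σ ℚ) : PowerSeries (MvPowerSeries σ ℚ) :=
  PowerSeries.mk fun k => (k.factorial : ℚ)⁻¹ • u ^ k

/-- A homogeneous polynomial of degree `N`: finitely many nonzero coefficients,
all in total degree exactly `N`. -/
def IsHomogDeg (N : ℕ) (a : MvPowerSeries σ ℚ) : Prop :=
  {d : σ →₀ ℕ | MvPowerSeries.coeff d a ≠ 0}.Finite ∧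
    ∀ d : σ →₀ ℕ, MvPowerSeries.coeff d a ≠ 0 → monDeg d = N

/-- Iterated `⊙`-product of a nonempty list. -/
noncomputable def odotList (N : ℕ) : List (MvPowerSeries σ ℚ) → MvPowerSeries σ ℚ
  | [] => 1
  | [f] => f
  | f :: g :: rest => odot N f (odotList N (g :: rest))


/-!
Let `R = MvPowerSeries σ ℚ` and `G f = ∑ₛ f^(s) Xˢ ∈ R⟦X⟧`. On `Θ`, `G` is injective and
multiplicative, sends a homogeneous `A` of degree `N k` to `A Xᵏ` and `1 - u` to `1 - uX`.
As `(1 - v)⁻¹` has components `vˡ`, the binomial coefficients in `⊙` make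
`G (f ⊙ (1 - v)⁻¹)` the binomial transform `F(X / (1 - vX)) / (1 - vX)` of `F = G f`. This
transform sends `Xᵏ` to `Xᵏ / (1 - vX)ᵏ⁺¹` and turns a factor `1 - uX` into
`(1 - (u + v)X) / (1 - vX)`; applied to `G f = A Xᵏ ∏ (1 - uᵢX)⁻¹` it gives
`A Xᵏ (1 - vX)ᵐ⁻ᵏ⁻¹ ∏ (1 - (uᵢ + v)X)⁻¹`, which is `G` of the right-hand side.
-/

open Finset

namespace MvPowerSeries

variable {R : Type*} [CommSemiring R]

theorem isHomogeneous_iff {f : MvPowerSeries σ R} {n : ℕ} :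
    f.IsHomogeneous n ↔ ∀ d, coeff d f ≠ 0 → d.degree = n := by
  simp only [IsHomogeneous, IsWeightedHomogeneous, Finsupp.degree_eq_weight_one]
  rfl

theorem isHomogeneous_one : (1 : MvPowerSeries σ R).IsHomogeneous 0 := by
  classical
  refine isHomogeneous_iff.2 fun d hd => ?_
  rw [coeff_one] at hd
  have : d = 0 := by by_contra h; exact hd (if_neg h)
  simp [this]

theorem homogeneousComponent_mul (n : ℕ) (f g : MvPowerSeries σ R) :
    homogeneousComponent n (f * g) =
      ∑ x ∈ antidiagonal n, homogeneousComponent x.1 f * homogeneousComponent x.2 g := by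
  classical
  ext d
  simp only [coeff_homogeneousComponent, map_sum, coeff_mul, ite_mul, mul_ite, zero_mul,
    mul_zero]
  rw [sum_comm]
  split_ifs with hd
  · refine sum_congr rfl fun y hy => ?_
    rw [HasAntidiagonal.mem_antidiagonal] at hy
    rw [sum_eq_single (y.1.degree, y.2.degree)]
    · simp
    · rintro x - hx
      split_ifs <;> simp_all
    · simp [← hd, ← hy]
  · refine (sum_eq_zero fun y hy => sum_eq_zero fun x hx => ?_).symm
    rw [HasAntidiagonal.mem_antidiagonal] at hx hy
    split_ifs with h1 h2 <;> first | rfl | exact absurd (by rw [← hy, map_add, h1, h2, hx]) hd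

namespace IsHomogeneous

theorem prod {ι : Type*} (s : Finset ι) {f : ι → MvPowerSeries σ R} {n : ι → ℕ}
    (h : ∀ i ∈ s, (f i).IsHomogeneous (n i)) :
    (∏ i ∈ s, f i).IsHomogeneous (∑ i ∈ s, n i) := by
  classical
  induction s using Finset.induction_on with
  | empty => rw [prod_empty, sum_empty]; exact isHomogeneous_one
  | insert i s hi ih =>
    rw [prod_insert hi, sum_insert hi]
    exact IsHomogeneous.mul (h i (mem_insert_self i s))
      (ih fun j hj => h j (mem_insert_of_mem hj))

theorem constantCoeff_eq_zero {f : MvPowerSeries σ R} {n : ℕ} (hf : f.IsHomogeneous n)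
    (hn : n ≠ 0) : constantCoeff f = 0 := by
  simpa using hf.coeff_eq_zero (d := 0) (by simpa using hn.symm)

theorem constantCoeff_one_sub_ne_zero {R : Type*} [CommRing R] [Nontrivial R]
    {u : MvPowerSeries σ R} {n : ℕ} (hu : u.IsHomogeneous n) (hn : n ≠ 0) :
    constantCoeff (1 - u) ≠ 0 := by
  simp [hu.constantCoeff_eq_zero hn]

end IsHomogeneous

end MvPowerSeries

open MvPowerSeries hiding C X

theorem monDeg_eq_degree (d : σ →₀ ℕ) : monDeg d = d.degree := rfl

theorem IsHomogDeg.isHomogeneous {N : ℕ} {a : MvPowerSeries σ ℚ} (ha : IsHomogDeg N a) :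
    a.IsHomogeneous N :=
  isHomogeneous_iff.2 ha.2

def theta (N : ℕ) : Subring (MvPowerSeries σ ℚ) where
  carrier := {f | InTheta N f}
  mul_mem' {f g} hf hg d hd := by
    classical
    rw [coeff_mul]
    refine sum_eq_zero fun x hx => ?_
    rw [HasAntidiagonal.mem_antidiagonal] at hx
    by_cases h1 : N ∣ monDeg x.1
    · have h2 : ¬ N ∣ monDeg x.2 := fun h2 =>
        hd (by rw [← hx, monDeg_eq_degree, map_add]; exact dvd_add h1 h2)
      rw [hg _ h2, mul_zero]
    · rw [hf _ h1, zero_mul]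
  one_mem' d hd := by
    classical
    rw [coeff_one, if_neg]
    rintro rfl
    exact hd (by simp [monDeg_eq_degree])
  add_mem' {f g} hf hg d hd := by rw [map_add, hf d hd, hg d hd, add_zero]
  zero_mem' _ _ := rfl
  neg_mem' {f} hf d hd := by rw [map_neg, hf d hd, neg_zero]

section Theta

variable {N : ℕ}

theorem MvPowerSeries.IsHomogeneous.mem_theta {j : ℕ} {f : MvPowerSeries σ ℚ}
    (hf : f.IsHomogeneous (N * j)) : f ∈ theta N := fun d hd => by
  by_contra h
  exact hd ⟨j, isHomogeneous_iff.1 hf d h⟩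

theorem MvPowerSeries.IsHomogeneous.one_sub_mem_theta {u : MvPowerSeries σ ℚ}
    (hu : u.IsHomogeneous N) : 1 - u ∈ theta N :=
  sub_mem (one_mem _) (IsHomogeneous.mem_theta (j := 1) (by rwa [mul_one]))

theorem homogeneousComponent_eq_zero_of_mem_theta {f : MvPowerSeries σ ℚ} (hf : f ∈ theta N)
    {n : ℕ} (hn : ¬ N ∣ n) : homogeneousComponent n f = 0 := by
  ext d
  rw [coeff_homogeneousComponent, map_zero]
  split_ifs with h
  · exact hf d (by rwa [monDeg_eq_degree, h])
  · rfl

end Theta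

section HomComp

variable {N : ℕ}

theorem coeff_homComp (f : MvPowerSeries σ ℚ) (s : ℕ) (d : σ →₀ ℕ) :
    coeff d (homComp N f s) = if monDeg d = N * s then coeff d f else 0 := rfl

theorem coeff_odot (f g : MvPowerSeries σ ℚ) (d : σ →₀ ℕ) :
    coeff d (odot N f g) = ∑ k ∈ range (monDeg d + 1), ∑ l ∈ range (monDeg d + 1),
      ((k + l).choose k : ℚ) * coeff d (homComp N f k * homComp N g l) := rfl

theorem homComp_eq_homogeneousComponent (f : MvPowerSeries σ ℚ) (s : ℕ) :
    homComp N f s = homogeneousComponent (N * s) f := by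
  ext d
  rw [coeff_homogeneousComponent]
  rfl

theorem isHomogeneous_homComp (f : MvPowerSeries σ ℚ) (s : ℕ) :
    (homComp N f s).IsHomogeneous (N * s) := by
  rw [homComp_eq_homogeneousComponent]
  exact isHomogeneous_homogeneousComponent f _

theorem coeff_homComp_mul_homComp_eq_zero (f g : MvPowerSeries σ ℚ) {k l : ℕ} {d : σ →₀ ℕ}
    (hd : monDeg d ≠ N * (k + l)) : coeff d (homComp N f k * homComp N g l) = 0 :=
  IsHomogeneous.coeff_eq_zero (IsHomogeneous.mul (isHomogeneous_homComp f k)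
    (isHomogeneous_homComp g l)) (by rwa [← mul_add])

theorem eq_of_homComp_eq {f g : MvPowerSeries σ ℚ} (hf : f ∈ theta N) (hg : g ∈ theta N)
    (h : ∀ s, homComp N f s = homComp N g s) : f = g := by
  ext d
  by_cases hd : N ∣ monDeg d
  · obtain ⟨s, hs⟩ := hd
    have := congrArg (coeff d) (h s)
    rwa [coeff_homComp, coeff_homComp, if_pos hs, if_pos hs] at this
  · rw [hf d hd, hg d hd]

theorem homComp_of_isHomogeneous (hN : N ≠ 0) {A : MvPowerSeries σ ℚ} {j : ℕ}
    (hA : A.IsHomogeneous (N * j)) (s : ℕ) : homComp N A s = if s = j then A else 0 := by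
  rw [homComp_eq_homogeneousComponent]
  split_ifs with hs
  · rw [hs, ← isHomogeneous_iff_eq_homogeneousComponent.1 hA]
  · ext d
    rw [coeff_homogeneousComponent, map_zero]
    split_ifs with hd
    · exact hA.coeff_eq_zero (by rwa [hd, Ne, mul_right_inj' hN])
    · rfl

theorem homComp_mul (hN : N ≠ 0) (f : MvPowerSeries σ ℚ) {g : MvPowerSeries σ ℚ}
    (hg : g ∈ theta N) (s : ℕ) :
    homComp N (f * g) s = ∑ x ∈ antidiagonal s, homComp N f x.1 * homComp N g x.2 := by
  simp only [homComp_eq_homogeneousComponent, homogeneousComponent_mul]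
  symm
  refine sum_of_injOn (fun x => (N * x.1, N * x.2)) ?_ ?_ ?_ fun _ _ => rfl
  · rintro ⟨a, b⟩ - ⟨a', b'⟩ - h
    simp only [Prod.mk.injEq, mul_right_inj' hN] at h
    rw [h.1, h.2]
  · rintro ⟨a, b⟩ h
    simp only [mem_coe, HasAntidiagonal.mem_antidiagonal] at h ⊢
    rw [← h, mul_add]
  · -- only pairs of multiples of `N` contribute, since `g ∈ Θ`
    rintro ⟨a, b⟩ h hne
    rw [HasAntidiagonal.mem_antidiagonal] at h
    by_cases hb : N ∣ b
    · obtain ⟨b', rfl⟩ := hb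
      obtain ⟨a', rfl⟩ : N ∣ a :=
        (Nat.dvd_add_left (dvd_mul_right N b')).1 (h ▸ dvd_mul_right N s)
      refine absurd ⟨(a', b'), ?_, rfl⟩ hne
      simpa [← mul_add, mul_right_inj' hN] using h
    · rw [homogeneousComponent_eq_zero_of_mem_theta hg hb, mul_zero]

theorem homComp_odot (hN : N ≠ 0) (f g : MvPowerSeries σ ℚ) (s : ℕ) :
    homComp N (odot N f g) s =
      ∑ x ∈ antidiagonal s, (s.choose x.1 : ℚ) • (homComp N f x.1 * homComp N g x.2) := by
  ext d
  simp only [map_sum, coeff_smul]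
  by_cases hd : monDeg d = N * s
  · have hs : s ≤ monDeg d := hd ▸ Nat.le_mul_of_pos_left s (Nat.pos_of_ne_zero hN)
    calc coeff d (homComp N (odot N f g) s)
        = ∑ x ∈ range (monDeg d + 1) ×ˢ range (monDeg d + 1),
            ((x.1 + x.2).choose x.1 : ℚ) * coeff d (homComp N f x.1 * homComp N g x.2) := by
          rw [coeff_homComp, if_pos hd, coeff_odot, sum_product]
      _ = ∑ x ∈ antidiagonal s,
            ((x.1 + x.2).choose x.1 : ℚ) * coeff d (homComp N f x.1 * homComp N g x.2) := by
          refine (sum_subset (fun x hx => ?_) fun x _ hx => ?_).symm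
          · rw [HasAntidiagonal.mem_antidiagonal] at hx
            simp only [mem_product, mem_range]
            omega
          · rw [HasAntidiagonal.mem_antidiagonal] at hx
            rw [coeff_homComp_mul_homComp_eq_zero _ _ (by rwa [hd, Ne, mul_right_inj' hN, eq_comm]),
              mul_zero]
      _ = _ := sum_congr rfl fun x hx => by rw [HasAntidiagonal.mem_antidiagonal.1 hx]
  · refine (if_neg hd).trans (sum_eq_zero fun x hx => ?_).symm
    rw [coeff_homComp_mul_homComp_eq_zero _ _ (by rwa [HasAntidiagonal.mem_antidiagonal.1 hx]),
      mul_zero]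

theorem odot_mem_theta (f g : MvPowerSeries σ ℚ) : odot N f g ∈ theta N := fun d hd => by
  refine (coeff_odot f g d).trans (sum_eq_zero fun k _ => sum_eq_zero fun l _ => ?_)
  rw [coeff_homComp_mul_homComp_eq_zero _ _ fun h => hd ⟨k + l, h⟩, mul_zero]

end HomComp

namespace PowerSeries

variable {R : Type*} [CommRing R]

/-- The series `F(X / (1 - v X)) / (1 - v X)`, written out coefficientwise. -/
noncomputable def binomialTransform (v : R) (F : R⟦X⟧) : R⟦X⟧ :=
  mk fun s => ∑ x ∈ antidiagonal s, s.choose x.1 • (coeff x.1 F * v ^ x.2)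

theorem coeff_binomialTransform (v : R) (F : R⟦X⟧) (s : ℕ) :
    coeff s (binomialTransform v F) =
      ∑ x ∈ antidiagonal s, s.choose x.1 • (coeff x.1 F * v ^ x.2) :=
  coeff_mk _ _

@[simp]
theorem constantCoeff_binomialTransform (v : R) (F : R⟦X⟧) :
    constantCoeff (binomialTransform v F) = constantCoeff F := by
  rw [← coeff_zero_eq_constantCoeff_apply, ← coeff_zero_eq_constantCoeff_apply,
    coeff_binomialTransform]
  simp

theorem binomialTransform_sub (v : R) (F G : R⟦X⟧) :
    binomialTransform v (F - G) = binomialTransform v F - binomialTransform v G := by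
  ext s
  simp only [coeff_binomialTransform, map_sub, sub_mul, smul_sub, sum_sub_distrib]

theorem binomialTransform_C_mul (v r : R) (F : R⟦X⟧) :
    binomialTransform v (C r * F) = C r * binomialTransform v F := by
  ext s
  simp only [coeff_binomialTransform, coeff_C_mul, mul_sum, mul_smul_comm, mul_assoc]

theorem binomialTransform_one (v : R) : binomialTransform v 1 = mk (v ^ ·) := by
  ext s
  rw [coeff_binomialTransform, coeff_mk, sum_eq_single (0, s)]
  · simp
  · rintro ⟨_ | p, q⟩ hx hne
    · rw [HasAntidiagonal.mem_antidiagonal, zero_add] at hx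
      exact absurd (by simp [← hx]) hne
    · simp
  · simp

theorem one_sub_C_mul_X_mul_mk_pow (v : R) : (1 - C v * X) * mk (v ^ ·) = 1 := by
  have := congrArg (rescale v) (mk_one_mul_one_sub_eq_one (S := R))
  rw [map_mul, map_sub, map_one, rescale_X, mul_comm] at this
  convert this using 2
  ext n
  simp

theorem coeff_succ_binomialTransform_X_mul (v : R) (F : R⟦X⟧) (s : ℕ) :
    coeff (s + 1) (binomialTransform v (X * F)) =
      ∑ x ∈ antidiagonal s, (s + 1).choose (x.1 + 1) • (coeff x.1 F * v ^ x.2) := by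
  simp [coeff_binomialTransform, Nat.sum_antidiagonal_succ]

theorem mul_coeff_binomialTransform_X_mul (v : R) (F : R⟦X⟧) (s : ℕ) :
    v * coeff s (binomialTransform v (X * F)) =
      ∑ x ∈ antidiagonal s, s.choose (x.1 + 1) • (coeff x.1 F * v ^ x.2) := by
  rcases s with _ | s
  · simp [coeff_binomialTransform]
  · rw [coeff_succ_binomialTransform_X_mul, Nat.sum_antidiagonal_succ', mul_sum]
    simp [Nat.choose_succ_self, pow_succ', mul_left_comm]

/-- Pascal's rule `C(s+1, p+1) = C(s, p+1) + C(s, p)`, in generating-function form. -/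
theorem one_sub_C_mul_X_mul_binomialTransform_X_mul (v : R) (F : R⟦X⟧) :
    (1 - C v * X) * binomialTransform v (X * F) = X * binomialTransform v F := by
  ext (_ | s)
  · simp
  · rw [sub_mul, one_mul, mul_assoc, map_sub, coeff_C_mul, coeff_succ_X_mul, coeff_succ_X_mul,
      coeff_succ_binomialTransform_X_mul, mul_coeff_binomialTransform_X_mul,
      coeff_binomialTransform, ← sum_sub_distrib]
    refine sum_congr rfl fun x _ => ?_
    rw [Nat.choose_succ_succ', add_smul, add_sub_cancel_right]

theorem one_sub_C_mul_X_pow_succ_mul_binomialTransform_X_pow (v : R) (k : ℕ) :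
    (1 - C v * X) ^ (k + 1) * binomialTransform v (X ^ k) = X ^ k := by
  induction k with
  | zero => rw [zero_add, pow_one, pow_zero, binomialTransform_one, one_sub_C_mul_X_mul_mk_pow]
  | succ k ih =>
    rw [pow_succ' X k, pow_succ (1 - C v * X) (k + 1), mul_assoc,
      one_sub_C_mul_X_mul_binomialTransform_X_mul, mul_left_comm, ih]

theorem one_sub_C_mul_X_mul_binomialTransform_one_sub_C_mul_X_mul (v u : R) (F : R⟦X⟧) :
    (1 - C v * X) * binomialTransform v ((1 - C u * X) * F) =
      (1 - C (u + v) * X) * binomialTransform v F := by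
  rw [sub_mul 1 (C u * X) F, one_mul, mul_assoc, binomialTransform_sub, binomialTransform_C_mul,
    mul_sub, mul_left_comm, one_sub_C_mul_X_mul_binomialTransform_X_mul, map_add]
  ring

theorem one_sub_C_mul_X_pow_card_mul_binomialTransform_prod_mul {ι : Type*} (v : R)
    (s : Finset ι) (u : ι → R) (F : R⟦X⟧) :
    (1 - C v * X) ^ s.card * binomialTransform v ((∏ i ∈ s, (1 - C (u i) * X)) * F) =
      (∏ i ∈ s, (1 - C (u i + v) * X)) * binomialTransform v F := by
  classical
  induction s using Finset.induction_on with
  | empty => simp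
  | insert i s hi ih =>
    rw [prod_insert hi, prod_insert hi, card_insert_of_notMem hi, pow_succ, mul_assoc,
      mul_assoc, one_sub_C_mul_X_mul_binomialTransform_one_sub_C_mul_X_mul, mul_left_comm, ih,
      mul_assoc]

theorem prod_mul_binomialTransform_of_prod_mul_eq {ι : Type*} {s : Finset ι} {u : ι → R}
    {v A : R} {F : R⟦X⟧} {k : ℕ} (hk : k < s.card)
    (hF : (∏ i ∈ s, (1 - C (u i) * X)) * F = C A * X ^ k) :
    (∏ i ∈ s, (1 - C (u i + v) * X)) * binomialTransform v F =
      C A * X ^ k * (1 - C v * X) ^ (s.card - k - 1) := by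
  rw [← one_sub_C_mul_X_pow_card_mul_binomialTransform_prod_mul, hF, binomialTransform_C_mul]
  obtain ⟨c, hc⟩ := Nat.exists_eq_add_of_lt hk
  rw [hc, show k + c + 1 - k - 1 = c by omega]
  linear_combination (C A * (1 - C v * X) ^ c) *
    one_sub_C_mul_X_pow_succ_mul_binomialTransform_X_pow v k

end PowerSeries

section GradedSeries

open PowerSeries (C X binomialTransform)

variable {N : ℕ}

noncomputable def gradedSeries (N : ℕ) (f : MvPowerSeries σ ℚ) :
    PowerSeries (MvPowerSeries σ ℚ) :=
  PowerSeries.mk (homComp N f)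

theorem coeff_gradedSeries (f : MvPowerSeries σ ℚ) (s : ℕ) :
    PowerSeries.coeff s (gradedSeries N f) = homComp N f s :=
  PowerSeries.coeff_mk _ _

theorem eq_of_gradedSeries_eq {f g : MvPowerSeries σ ℚ} (hf : f ∈ theta N) (hg : g ∈ theta N)
    (h : gradedSeries N f = gradedSeries N g) : f = g :=
  eq_of_homComp_eq hf hg fun s => by rw [← coeff_gradedSeries, h, coeff_gradedSeries]

theorem gradedSeries_sub (f g : MvPowerSeries σ ℚ) :
    gradedSeries N (f - g) = gradedSeries N f - gradedSeries N g := by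
  ext s : 1
  simp only [map_sub, coeff_gradedSeries, homComp_eq_homogeneousComponent]

theorem gradedSeries_of_isHomogeneous (hN : N ≠ 0) {A : MvPowerSeries σ ℚ} {j : ℕ}
    (hA : A.IsHomogeneous (N * j)) : gradedSeries N A = C A * X ^ j := by
  ext s : 1
  rw [coeff_gradedSeries, homComp_of_isHomogeneous hN hA, PowerSeries.coeff_C_mul_X_pow]

theorem gradedSeries_one (hN : N ≠ 0) : gradedSeries N (1 : MvPowerSeries σ ℚ) = 1 := by
  rw [gradedSeries_of_isHomogeneous hN (j := 0) (by rw [mul_zero]; exact isHomogeneous_one),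
    map_one, pow_zero, mul_one]

theorem gradedSeries_one_sub (hN : N ≠ 0) {u : MvPowerSeries σ ℚ} (hu : u.IsHomogeneous N) :
    gradedSeries N (1 - u) = 1 - C u * X := by
  rw [gradedSeries_sub, gradedSeries_one hN,
    gradedSeries_of_isHomogeneous hN (j := 1) (by rwa [mul_one]), pow_one]

theorem gradedSeries_mul (hN : N ≠ 0) (f : MvPowerSeries σ ℚ) {g : MvPowerSeries σ ℚ}
    (hg : g ∈ theta N) : gradedSeries N (f * g) = gradedSeries N f * gradedSeries N g := by
  ext s : 1
  simp only [coeff_gradedSeries, homComp_mul hN f hg, PowerSeries.coeff_mul]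

theorem gradedSeries_prod (hN : N ≠ 0) {ι : Type*} (s : Finset ι) {f : ι → MvPowerSeries σ ℚ}
    (hf : ∀ i ∈ s, f i ∈ theta N) :
    gradedSeries N (∏ i ∈ s, f i) = ∏ i ∈ s, gradedSeries N (f i) := by
  classical
  induction s using Finset.induction_on with
  | empty => rw [prod_empty, prod_empty, gradedSeries_one hN]
  | insert i s hi ih =>
    rw [prod_insert hi, prod_insert hi, mul_comm,
      gradedSeries_mul hN _ (hf i (mem_insert_self i s)),
      ih fun j hj => hf j (mem_insert_of_mem hj), mul_comm]

theorem gradedSeries_pow (hN : N ≠ 0) {f : MvPowerSeries σ ℚ} (hf : f ∈ theta N) (j : ℕ) :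
    gradedSeries N (f ^ j) = gradedSeries N f ^ j := by
  simpa using gradedSeries_prod hN (range j) fun _ _ => hf

theorem gradedSeries_inv_one_sub (hN : N ≠ 0) {v : MvPowerSeries σ ℚ}
    (hv : v.IsHomogeneous N) : gradedSeries N (1 - v)⁻¹ = PowerSeries.mk (v ^ ·) := by
  calc gradedSeries N (1 - v)⁻¹
      = gradedSeries N (1 - v)⁻¹ * ((1 - C v * X) * PowerSeries.mk (v ^ ·)) := by
        rw [PowerSeries.one_sub_C_mul_X_mul_mk_pow, mul_one]
    _ = gradedSeries N ((1 - v)⁻¹ * (1 - v)) * PowerSeries.mk (v ^ ·) := by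
        rw [gradedSeries_mul hN _ hv.one_sub_mem_theta, gradedSeries_one_sub hN hv, mul_assoc]
    _ = PowerSeries.mk (v ^ ·) := by
        rw [MvPowerSeries.inv_mul_cancel _ (hv.constantCoeff_one_sub_ne_zero hN),
          gradedSeries_one hN, one_mul]

theorem gradedSeries_odot_inv_one_sub (hN : N ≠ 0) (f : MvPowerSeries σ ℚ)
    {v : MvPowerSeries σ ℚ} (hv : v.IsHomogeneous N) :
    gradedSeries N (odot N f (1 - v)⁻¹) = binomialTransform v (gradedSeries N f) := by
  ext s : 1
  rw [coeff_gradedSeries, homComp_odot hN, PowerSeries.coeff_binomialTransform]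
  refine sum_congr rfl fun x _ => ?_
  rw [coeff_gradedSeries, ← coeff_gradedSeries (N := N) _ x.2, gradedSeries_inv_one_sub hN hv,
    PowerSeries.coeff_mk, Nat.cast_smul_eq_nsmul]

theorem prod_one_sub_C_mul_X_mul_gradedSeries (hN : N ≠ 0) {ι : Type*} (s : Finset ι)
    {A : MvPowerSeries σ ℚ} {k : ℕ} (hA : A.IsHomogeneous (N * k))
    {u : ι → MvPowerSeries σ ℚ} (hu : ∀ i ∈ s, (u i).IsHomogeneous N) :
    (∏ i ∈ s, (1 - C (u i) * X)) * gradedSeries N (A * ∏ i ∈ s, (1 - u i)⁻¹) = C A * X ^ k := by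
  have hmem : ∏ i ∈ s, (1 - u i) ∈ theta N :=
    prod_mem fun i hi => IsHomogeneous.one_sub_mem_theta (hu i hi)
  have hinv : (∏ i ∈ s, (1 - u i)⁻¹) * ∏ i ∈ s, (1 - u i) = 1 := by
    rw [← prod_mul_distrib]
    exact prod_eq_one fun i hi =>
      MvPowerSeries.inv_mul_cancel _ (IsHomogeneous.constantCoeff_one_sub_ne_zero (hu i hi) hN)
  rw [← prod_congr rfl fun i hi => gradedSeries_one_sub hN (hu i hi),
    ← gradedSeries_prod hN s fun i hi => IsHomogeneous.one_sub_mem_theta (hu i hi), mul_comm,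
    ← gradedSeries_mul hN _ hmem, mul_assoc, hinv, mul_one, gradedSeries_of_isHomogeneous hN hA]

theorem odot_prod_inv_one_sub_inv_mul_prod (hN : N ≠ 0) {ι : Type*} (s : Finset ι)
    {A : MvPowerSeries σ ℚ} {k : ℕ} (hA : A.IsHomogeneous (N * k)) (hk : k < s.card)
    {u : ι → MvPowerSeries σ ℚ} (hu : ∀ i ∈ s, (u i).IsHomogeneous N)
    {v : MvPowerSeries σ ℚ} (hv : v.IsHomogeneous N) :
    odot N (A * ∏ i ∈ s, (1 - u i)⁻¹) (1 - v)⁻¹ * ∏ i ∈ s, (1 - (u i + v)) =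
      A * (1 - v) ^ (s.card - k - 1) := by
  have huv (i) (hi : i ∈ s) : (u i + v).IsHomogeneous N := IsHomogeneous.add (hu i hi) hv
  have hmem : ∏ i ∈ s, (1 - (u i + v)) ∈ theta N :=
    prod_mem fun i hi => IsHomogeneous.one_sub_mem_theta (huv i hi)
  have hpow : (1 - v) ^ (s.card - k - 1) ∈ theta N := pow_mem hv.one_sub_mem_theta _
  refine eq_of_gradedSeries_eq (mul_mem (odot_mem_theta _ _) hmem) (mul_mem hA.mem_theta hpow) ?_
  rw [gradedSeries_mul hN _ hmem, gradedSeries_mul hN _ hpow,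
    gradedSeries_odot_inv_one_sub hN _ hv,
    gradedSeries_prod hN _ fun i hi => IsHomogeneous.one_sub_mem_theta (huv i hi),
    prod_congr rfl fun i hi => gradedSeries_one_sub hN (huv i hi),
    gradedSeries_pow hN hv.one_sub_mem_theta, gradedSeries_one_sub hN hv,
    gradedSeries_of_isHomogeneous hN hA, mul_comm]
  exact PowerSeries.prod_mul_binomialTransform_of_prod_mul_eq hk
    (prod_one_sub_C_mul_X_mul_gradedSeries hN s hA hu)

end GradedSeries

theorem odot_prod_inv_one_sub_inv_general {σ : Type*} (N : ℕ) (hN : 1 ≤ N)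
    (m : ℕ) (k : ℕ) (hk : k < m)
    (a : Fin k → MvPowerSeries σ ℚ) (u : Fin m → MvPowerSeries σ ℚ)
    (v : MvPowerSeries σ ℚ)
    (ha : ∀ i, IsHomogDeg N (a i)) (hu : ∀ i, IsHomogDeg N (u i)) (hv : IsHomogDeg N v) :
    odot N ((∏ i, a i) * ∏ i, (1 - u i)⁻¹) ((1 - v)⁻¹) =
      (∏ i, a i) * (1 - v) ^ (m - k - 1) * ∏ i, (1 - u i - v)⁻¹ := by
  have hN0 : N ≠ 0 := by omega
  have hA : (∏ i, a i).IsHomogeneous (∑ _i : Fin k, N) :=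
    IsHomogeneous.prod univ fun i _ => (ha i).isHomogeneous
  rw [sum_const, card_univ, Fintype.card_fin, smul_eq_mul, mul_comm] at hA
  have hv' : v.IsHomogeneous N := hv.isHomogeneous
  have key := odot_prod_inv_one_sub_inv_mul_prod hN0 univ hA (by simpa using hk)
    (fun i _ => (hu i).isHomogeneous) hv'
  rw [card_univ, Fintype.card_fin] at key
  simp only [sub_sub, ← key, mul_assoc, ← prod_mul_distrib]
  rw [prod_eq_one fun i _ => MvPowerSeries.mul_inv_cancel _
    (IsHomogeneous.constantCoeff_one_sub_ne_zero (IsHomogeneous.add (hu i).isHomogeneous hv') hN0),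
    mul_one]

/-- Proposition `11v`:
`(a_1⋯a_k ∏_i (1-u_i)⁻¹) ⊙ (1-v)⁻¹ = a_1⋯a_k (1-v)^{m-k-1} ∏_i (1-u_i-v)⁻¹`. -/
theorem odot_prod_inv_one_sub_inv {σ : Type*} (N : ℕ) (hN : 1 ≤ N)
    (m : ℕ) (hm : 1 ≤ m) (k : ℕ) (hk : k < m)
    (a : Fin k → MvPowerSeries σ ℚ) (u : Fin m → MvPowerSeries σ ℚ)
    (v : MvPowerSeries σ ℚ)
    (ha : ∀ i, IsHomogDeg N (a i)) (hu : ∀ i, IsHomogDeg N (u i)) (hv : IsHomogDeg N v)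
    (huinj : Function.Injective u) :
    odot N ((∏ i, a i) * ∏ i, (1 - u i)⁻¹) ((1 - v)⁻¹) =
      (∏ i, a i) * (1 - v) ^ (m - k - 1) * ∏ i, (1 - u i - v)⁻¹ :=
  odot_prod_inv_one_sub_inv_general N hN m k hk a u v ha hu hv
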